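/- In a Chinese auction with continuous given budgets in which the valuations are symmetric (v_{i,j} = v_j for all players i) and strictly positive and all budgets are equal (w_i = w for all i), there exists a symmetric pure Nash equilibrium; specifically, the profile in which every player allocates x_{i,j} = (v_j/(v_1 + … + v_m))·w on each item j is a pure Nash equilibrium in which all players play the same strategy. -/

import Mathlib

/-!
A player's payoff from item `j` is `v j * y / (y + r)`, where `r` is what the others bid on `j`;
it is concave in `y`, with slope `r v j / (y + r)²`. A strategy whose slopes agree on all items
is therefore a best response: the tangent planes bound the payoff of every other strategy with
the same budget. At the proportional profile `x j = c v j`, `c = w / ∑ v`, the others bid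
`(n - 1) c v j`, so the slope is `(n - 1) / (n² c)` on every item.
-/

/-- Utility of player `i` in a Chinese auction with given budgets and symmetric
valuations `v : Fin m → ℝ`. -/
noncomputable def utilSym {n m : ℕ} (v : Fin m → ℝ) (x : Fin n → Fin m → ℝ)
    (i : Fin n) : ℝ :=
  ∑ j, (if 0 < ∑ k, x k j then x i j / (∑ k, x k j) else 0) * v j

open Finset

lemma share_mul_le_tangent {v y y₀ r : ℝ} (hv : 0 ≤ v) (hr : 0 ≤ r) (hy : 0 ≤ y)
    (hy₀ : 0 < y₀ + r) :
    (if 0 < y + r then y / (y + r) else 0) * v ≤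
      y₀ / (y₀ + r) * v + r * v / (y₀ + r) ^ 2 * (y - y₀) := by
  split_ifs with h
  · have key : y₀ / (y₀ + r) * v + r * v / (y₀ + r) ^ 2 * (y - y₀) - y / (y + r) * v
        = r * v * (y - y₀) ^ 2 / ((y + r) * (y₀ + r) ^ 2) := by
      field_simp
      ring
    have : 0 ≤ r * v * (y - y₀) ^ 2 / ((y + r) * (y₀ + r) ^ 2) := by positivity
    linarith
  · obtain ⟨rfl, rfl⟩ : y = 0 ∧ r = 0 := by constructor <;> linarith
    rw [add_zero] at hy₀
    simp [hy₀.ne', hv]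

lemma sum_update_apply_eq {n m : ℕ} (x : Fin n → Fin m → ℝ) (i : Fin n) (y : Fin m → ℝ)
    (j : Fin m) :
    ∑ k, Function.update x i y k j = y j + (∑ k, x k j - x i j) := by
  have hdiff : ∑ k, (Function.update x i y k j - x k j) = y j - x i j := by
    rw [sum_eq_single i (fun k _ hk => by simp [hk]) (by simp)]
    simp
  rw [sum_sub_distrib] at hdiff
  linarith

theorem utilSym_update_le_of_marginal_eq {n m : ℕ} (v : Fin m → ℝ) (hv : ∀ j, 0 ≤ v j)
    (x : Fin n → Fin m → ℝ) (hx : ∀ k j, 0 ≤ x k j) (i : Fin n)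
    (htot : ∀ j, 0 < ∑ k, x k j) (μ : ℝ)
    (hμ : ∀ j, (∑ k, x k j - x i j) * v j / (∑ k, x k j) ^ 2 = μ)
    (y : Fin m → ℝ) (hy : ∀ j, 0 ≤ y j) (hbudget : ∑ j, y j = ∑ j, x i j) :
    utilSym v (Function.update x i y) i ≤ utilSym v x i := by
  have hothers : ∀ j, 0 ≤ ∑ k, x k j - x i j := fun j =>
    sub_nonneg.mpr (single_le_sum (fun k _ => hx k j) (mem_univ i))
  calc utilSym v (Function.update x i y) i
      ≤ ∑ j, (x i j / (∑ k, x k j) * v j + μ * (y j - x i j)) := by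
        refine sum_le_sum fun j _ => ?_
        have htangent := share_mul_le_tangent (hv j) (hothers j) (hy j)
          (by rw [add_sub_cancel]; exact htot j)
        rw [add_sub_cancel, hμ j] at htangent
        rwa [sum_update_apply_eq, Function.update_self]
    _ = utilSym v x i := by
        rw [sum_add_distrib, ← mul_sum, sum_sub_distrib, hbudget, sub_self, mul_zero, add_zero]
        exact sum_congr rfl fun j _ => by rw [if_pos (htot j)]

/-- With symmetric, strictly positive valuations and symmetric continuous
budgets (`w i = w` for all `i`), the profile where every player places
`(v j / ∑ v) * w` on item `j` is a pure Nash equilibrium in which all players play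
the same strategy (a symmetric pure Nash equilibrium). -/
theorem stmt2 {n m : ℕ} (v : Fin m → ℝ) (hv : ∀ j, 0 < v j)
    (w : ℝ) (hw : 0 < w)
    (x : Fin n → Fin m → ℝ) (hx : ∀ i j, x i j = (v j / ∑ k, v k) * w) :
    (∀ i i' : Fin n, x i = x i') ∧
    (∀ i : Fin n, ∀ y : Fin m → ℝ, (∀ j, 0 ≤ y j) → (∑ j, y j = w) →
      utilSym v (Function.update x i y) i ≤ utilSym v x i) := by
  refine ⟨fun i i' => funext fun j => by rw [hx, hx], fun i y hy hbudget => ?_⟩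
  have hitem : Nonempty (Fin m) := by
    by_contra hempty
    rw [not_nonempty_iff] at hempty
    simp [univ_eq_empty] at hbudget
    exact hw.ne hbudget
  set S := ∑ k, v k
  have hS : 0 < S := sum_pos (fun j _ => hv j) univ_nonempty
  have hn : (0 : ℝ) < n := by exact_mod_cast i.pos
  have htot : ∀ j, ∑ k, x k j = n * (v j / S * w) := fun j => by simp [hx]
  refine utilSym_update_le_of_marginal_eq v (fun j => (hv j).le) x
    (fun k j => by rw [hx]; have := hv j; positivity) i
    (fun j => by rw [htot]; have := hv j; positivity) ((n - 1) * S / (n ^ 2 * w))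
    (fun j => ?_) y hy ?_
  · rw [htot, hx]
    have := (hv j).ne'
    field_simp
  · rw [hbudget]
    simp only [hx, ← sum_mul, ← sum_div]
    rw [div_self hS.ne', one_mul]
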